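/- Let e(r,s) and f_{j}(r,s) for j ∈ J ⊆ ({-1}∪ℕ)² be formal power series in x, q, r, s over a commutative ring, with J finite. Then there exists a unique formal power series F(r,s) satisfying F(r,s) = e(r,s) + Σ_{(j₁,j₂)∈J} x·f_{(j₁,j₂)}(r,s)·F(σ_{j₁}(r), σ_{j₂}(s)), where σ_j(v) = 1 if j = −1 and σ_j(v) = q^j v if j ≥ 0. Moreover F is given by the explicit sum F(r,s) = Σ_{n≥0} x^n Σ_{J=(𝐣_1,…,𝐣_n), 𝐣_k∈J} e(q^{a_{1,n+1}} r^{b_{1,n+1}}, q^{a_{2,n+1}} s^{b_{2,n+1}}) ∏_{k=1}^n f_{𝐣_k}(q^{a_{1,k}} r^{b_{1,k}}, q^{a_{2,k}} s^{b_{2,k}}), where for each coordinate i ∈ {1,2}: a_{i,1}=0, b_{i,1}=1, and for k ≥ 2, if −1 occurs among j_{i,1},…,j_{i,k−1} then b_{i,k}=0 and a_{i,k} is the sum of the entries after the last occurrence of −1, while otherwise b_{i,k}=1 and a_{i,k} is the sum of all entries j_{i,1},…,j_{i,k−1}. -/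

import Mathlib

/-!
Comparing coefficients of `x`, the functional equation says exactly that `F₀ = e` and
`F_{n+1} = Σ_𝐣 f_𝐣 · σ_𝐣(F_n)`, so it has at most one solution. The explicit sum satisfies this
recursion: splitting off the first step `𝐣₁` of a path, the substitutions attached to the rest
of the path get composed with `σ_{𝐣₁}`, and `σ_j` sends `q^a r^b` to `q^{jb+a} r^b` for `j ≥ 0`
and to `q^a` for `j = -1`, which is how `a_{i,k}` and `b_{i,k}` are built up.
-/

noncomputable section

variable (R : Type*) [CommRing R]

/-- The coefficient ring `R[[q]][r,s]`: polynomials in `r` (variable 0) and `s`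
(variable 1) over formal power series in `q`.  Power series in `x` over this
ring model series in `x, q, r, s` for which the substitutions `r ↦ 1`,
`r ↦ q^j r`, `s ↦ 1`, `s ↦ q^j s` make sense. -/
abbrev RS := MvPolynomial (Fin 2) (PowerSeries R)

/-- The image of variable `i` under `σ_j`: `1` if `j = -1` (encoded `none`),
and `q^j·(variable i)` if `j ≥ 0` (encoded `some j`). -/
def sigOpt (o : Option ℕ) (i : Fin 2) : RS R :=
  match o with
  | none => 1
  | some j => MvPolynomial.C (PowerSeries.X ^ j) * MvPolynomial.X i

/-- The substitution `(r,s) ↦ (σ_{j₁}(r), σ_{j₂}(s))` for `𝐣 = (j₁,j₂)`. -/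
def sig2 (p : Option ℕ × Option ℕ) : RS R →+* RS R :=
  (MvPolynomial.aeval ![sigOpt R p.1 0, sigOpt R p.2 1]).toRingHom

/-- `a_{i,k}` for a coordinate sequence `c` over `{-1,0,1,2,…}` (with `-1`
encoded as `none`): the sum of the entries among the first `k` after the last
occurrence of `-1` (or of all of them if `-1` does not occur). -/
def A2 (c : ℕ → Option ℕ) (k : ℕ) : ℕ :=
  ∑ i ∈ Finset.range k,
    if ∀ j ∈ Finset.Ioo i k, c j ≠ none then (c i).getD 0 else 0

/-- `b_{i,k}`: equals `1` if `-1` (i.e. `none`) does not occur among the first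
`k` entries of the coordinate sequence `c`, else `0`. -/
def B2 (c : ℕ → Option ℕ) (k : ℕ) : ℕ :=
  if ∀ i < k, c i ≠ none then 1 else 0

/-- Extend a finite sequence of pairs to all of `ℕ` (values beyond `n` are
irrelevant). -/
def extPair (n : ℕ) (w : Fin n → Option ℕ × Option ℕ) : ℕ → Option ℕ × Option ℕ :=
  fun i => if h : i < n then w ⟨i, h⟩ else (some 0, some 0)

/-- The substitution `(r,s) ↦ (q^{a₁} r^{b₁}, q^{a₂} s^{b₂})`. -/
def subAB2 (a₁ b₁ a₂ b₂ : ℕ) : RS R →+* RS R :=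
  (MvPolynomial.aeval
    ![MvPolynomial.C (PowerSeries.X ^ a₁) * MvPolynomial.X (0 : Fin 2) ^ b₁,
      MvPolynomial.C (PowerSeries.X ^ a₂) * MvPolynomial.X (1 : Fin 2) ^ b₂]).toRingHom

/-- The explicit solution
`F(r,s) = Σ_{n≥0} x^n Σ_{J=(𝐣_1,…,𝐣_n), 𝐣_k∈𝒥}
  e(q^{a_{1,n+1}} r^{b_{1,n+1}}, q^{a_{2,n+1}} s^{b_{2,n+1}})
  ∏_{k=1}^n f_{𝐣_k}(q^{a_{1,k}} r^{b_{1,k}}, q^{a_{2,k}} s^{b_{2,k}})`. -/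
def Fsol2 (Jset : Finset (Option ℕ × Option ℕ)) (e : RS R)
    (f : Option ℕ × Option ℕ → RS R) : PowerSeries (RS R) :=
  PowerSeries.mk fun n =>
    ∑ w : Fin n → {p // p ∈ Jset},
      (fun c : ℕ → Option ℕ × Option ℕ =>
        subAB2 R (A2 (fun i => (c i).1) n) (B2 (fun i => (c i).1) n)
                 (A2 (fun i => (c i).2) n) (B2 (fun i => (c i).2) n) e *
        ∏ k : Fin n,
          subAB2 R (A2 (fun i => (c i).1) k) (B2 (fun i => (c i).1) k)
                   (A2 (fun i => (c i).2) k) (B2 (fun i => (c i).2) k)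
            (f (w k)))
      (extPair n fun k => (w k : Option ℕ × Option ℕ))

section FunctionalEquation

variable {S ι : Type*} [Semiring S] (s : Finset ι) (e : S) (f : ι → S) (σ : ι → S →+* S)

def functionalRHS (G : PowerSeries S) : PowerSeries S :=
  PowerSeries.C e + ∑ p ∈ s, PowerSeries.X * PowerSeries.C (f p) * PowerSeries.map (σ p) G

variable {s e f σ}

lemma coeff_zero_functionalRHS (G : PowerSeries S) :
    PowerSeries.coeff 0 (functionalRHS s e f σ G) = e := by
  simp [functionalRHS, mul_assoc, PowerSeries.coeff_zero_eq_constantCoeff]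

lemma coeff_succ_functionalRHS (G : PowerSeries S) (n : ℕ) :
    PowerSeries.coeff (n + 1) (functionalRHS s e f σ G)
      = ∑ p ∈ s, f p * σ p (PowerSeries.coeff n G) := by
  simp [functionalRHS, mul_assoc, map_sum, PowerSeries.coeff_succ_X_mul]

theorem eq_functionalRHS_iff {G : PowerSeries S} :
    G = functionalRHS s e f σ G ↔
      PowerSeries.coeff 0 G = e ∧
        ∀ n, PowerSeries.coeff (n + 1) G = ∑ p ∈ s, f p * σ p (PowerSeries.coeff n G) := by
  refine ⟨fun h => ⟨?_, fun n => ?_⟩, fun ⟨h₀, hsucc⟩ => PowerSeries.ext fun n => ?_⟩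
  · exact (congrArg (PowerSeries.coeff 0) h).trans (coeff_zero_functionalRHS G)
  · exact (congrArg (PowerSeries.coeff (n + 1)) h).trans (coeff_succ_functionalRHS G n)
  · cases n with
    | zero => rw [h₀, coeff_zero_functionalRHS]
    | succ n => rw [hsucc, coeff_succ_functionalRHS]

theorem eq_of_eq_functionalRHS {G H : PowerSeries S} (hG : G = functionalRHS s e f σ G)
    (hH : H = functionalRHS s e f σ H) : G = H := by
  obtain ⟨hG₀, hGsucc⟩ := eq_functionalRHS_iff.1 hG
  obtain ⟨hH₀, hHsucc⟩ := eq_functionalRHS_iff.1 hH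
  ext n
  induction n with
  | zero => rw [hG₀, hH₀]
  | succ n ih => rw [hGsucc, hHsucc, ih]

end FunctionalEquation

@[simp] lemma A2_zero (c : ℕ → Option ℕ) : A2 c 0 = 0 := by simp [A2]

@[simp] lemma B2_zero (c : ℕ → Option ℕ) : B2 c 0 = 1 := by simp [B2]

lemma forall_mem_Ioo_add_one_iff {P : ℕ → Prop} (i k : ℕ) :
    (∀ j ∈ Finset.Ioo i (k + 1), P j) ↔ ∀ j ∈ Finset.Ico i k, P (j + 1) := by
  simp only [Finset.mem_Ioo, Finset.mem_Ico]
  refine ⟨fun h j hj => h _ (by omega), fun h j hj => ?_⟩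
  obtain ⟨j, rfl⟩ := Nat.exists_eq_add_of_lt hj.1
  exact h (i + j) (by omega)

lemma B2_succ (c : ℕ → Option ℕ) (k : ℕ) :
    B2 c (k + 1) = (if c 0 = none then 0 else 1) * B2 (fun i => c (i + 1)) k := by
  by_cases h₀ : c 0 = none
  · simp only [B2, h₀, if_true, zero_mul, ite_eq_right_iff, one_ne_zero, imp_false, not_forall]
    exact ⟨0, k.succ_pos, by simpa using h₀⟩
  · simp only [B2, h₀, if_false, one_mul, Nat.forall_lt_succ_left, Ne, not_false_eq_true,
      true_and]

lemma A2_succ (c : ℕ → Option ℕ) (k : ℕ) :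
    A2 c (k + 1) = (c 0).getD 0 * B2 (fun i => c (i + 1)) k + A2 (fun i => c (i + 1)) k := by
  simp only [A2, B2, Finset.sum_range_succ', forall_mem_Ioo_add_one_iff,
    Finset.Ico_add_one_left_eq_Ioo]
  rw [add_comm]
  congr 1
  simp

lemma subAB2_zero_one : subAB2 R 0 1 0 1 = RingHom.id (RS R) := by
  refine MvPolynomial.ringHom_ext (fun a => by simp [subAB2]) fun i => ?_
  fin_cases i <;> simp [subAB2]

lemma sig2_comp_subAB2 (p : Option ℕ × Option ℕ) (a₁ b₁ a₂ b₂ : ℕ) :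
    (sig2 R p).comp (subAB2 R a₁ b₁ a₂ b₂)
      = subAB2 R (p.1.getD 0 * b₁ + a₁) ((if p.1 = none then 0 else 1) * b₁)
          (p.2.getD 0 * b₂ + a₂) ((if p.2 = none then 0 else 1) * b₂) := by
  refine MvPolynomial.ringHom_ext (fun a => by simp [subAB2, sig2]) fun i => ?_
  obtain ⟨_ | j₁, _ | j₂⟩ := p <;> fin_cases i <;> simp [subAB2, sig2, sigOpt, mul_pow] <;> ring

/-- The substitution `(r,s) ↦ (q^{a_{1,k}} r^{b_{1,k}}, q^{a_{2,k}} s^{b_{2,k}})` attached to the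
sequence of pairs `c`. -/
def stepSubst (c : ℕ → Option ℕ × Option ℕ) (k : ℕ) : RS R →+* RS R :=
  subAB2 R (A2 (fun i => (c i).1) k) (B2 (fun i => (c i).1) k)
    (A2 (fun i => (c i).2) k) (B2 (fun i => (c i).2) k)

lemma stepSubst_zero (c : ℕ → Option ℕ × Option ℕ) : stepSubst R c 0 = RingHom.id (RS R) := by
  simp [stepSubst, subAB2_zero_one]

lemma stepSubst_succ (c : ℕ → Option ℕ × Option ℕ) (k : ℕ) :
    stepSubst R c (k + 1) = (sig2 R (c 0)).comp (stepSubst R (fun i => c (i + 1)) k) := by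
  simp only [stepSubst, sig2_comp_subAB2, A2_succ, B2_succ]

def pathTerm (e : RS R) (f : Option ℕ × Option ℕ → RS R) (n : ℕ)
    (c : ℕ → Option ℕ × Option ℕ) : RS R :=
  stepSubst R c n e * ∏ k ∈ Finset.range n, stepSubst R c k (f (c k))

lemma pathTerm_zero (e : RS R) (f : Option ℕ × Option ℕ → RS R)
    (c : ℕ → Option ℕ × Option ℕ) : pathTerm R e f 0 c = e := by
  simp [pathTerm, stepSubst_zero]

lemma pathTerm_succ (e : RS R) (f : Option ℕ × Option ℕ → RS R) (n : ℕ)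
    (c : ℕ → Option ℕ × Option ℕ) :
    pathTerm R e f (n + 1) c = f (c 0) * sig2 R (c 0) (pathTerm R e f n fun i => c (i + 1)) := by
  simp only [pathTerm, Finset.prod_range_succ', stepSubst_succ, stepSubst_zero,
    RingHom.comp_apply, RingHom.id_apply, map_mul, map_prod]
  ring

lemma extPair_apply_of_lt {n : ℕ} (w : Fin n → Option ℕ × Option ℕ) (k : Fin n) :
    extPair n w k = w k := by
  simp [extPair]

lemma extPair_succ_apply_zero {n : ℕ} (w : Fin (n + 1) → Option ℕ × Option ℕ) :
    extPair (n + 1) w 0 = w 0 :=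
  extPair_apply_of_lt w 0

lemma extPair_succ_shift {n : ℕ} (w : Fin (n + 1) → Option ℕ × Option ℕ) :
    (fun i => extPair (n + 1) w (i + 1)) = extPair n (Fin.tail w) := by
  funext i
  by_cases hi : i < n
  · simp [extPair, hi, Fin.tail]
  · simp [extPair, hi]

section Fsol2

variable (Jset : Finset (Option ℕ × Option ℕ)) (e : RS R) (f : Option ℕ × Option ℕ → RS R)

lemma coeff_Fsol2 (n : ℕ) :
    PowerSeries.coeff n (Fsol2 R Jset e f)
      = ∑ w : Fin n → Jset, pathTerm R e f n (extPair n fun k => w k) := by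
  simp only [Fsol2, PowerSeries.coeff_mk, pathTerm, stepSubst, ← Fin.prod_univ_eq_prod_range,
    extPair_apply_of_lt]

lemma coeff_Fsol2_zero : PowerSeries.coeff 0 (Fsol2 R Jset e f) = e := by
  simp [coeff_Fsol2, pathTerm_zero]

lemma coeff_Fsol2_succ (n : ℕ) :
    PowerSeries.coeff (n + 1) (Fsol2 R Jset e f)
      = ∑ p ∈ Jset, f p * sig2 R p (PowerSeries.coeff n (Fsol2 R Jset e f)) := by
  rw [coeff_Fsol2, coeff_Fsol2, ← (Fin.consEquiv fun _ => Jset).sum_comp, Fintype.sum_prod_type,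
    ← Finset.sum_coe_sort Jset]
  refine Finset.sum_congr rfl fun p _ => ?_
  simp [pathTerm_succ, extPair_succ_apply_zero, extPair_succ_shift, Fin.tail_def, Finset.mul_sum,
    map_sum]

end Fsol2

theorem main_theorem_two_variables (Jset : Finset (Option ℕ × Option ℕ))
    (e : RS R) (f : Option ℕ × Option ℕ → RS R) :
    (Fsol2 R Jset e f
        = PowerSeries.C e
          + ∑ p ∈ Jset, PowerSeries.X * PowerSeries.C (f p)
              * PowerSeries.map (sig2 R p) (Fsol2 R Jset e f))
    ∧ ∀ G : PowerSeries (RS R),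
        (G = PowerSeries.C e
          + ∑ p ∈ Jset, PowerSeries.X * PowerSeries.C (f p)
              * PowerSeries.map (sig2 R p) G)
        → G = Fsol2 R Jset e f := by
  have hF : Fsol2 R Jset e f = functionalRHS Jset e f (sig2 R) (Fsol2 R Jset e f) :=
    eq_functionalRHS_iff.2 ⟨coeff_Fsol2_zero R Jset e f, coeff_Fsol2_succ R Jset e f⟩
  exact ⟨hF, fun G hG => eq_of_eq_functionalRHS hG hF⟩

end
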